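/- Let $D(m)$ count unordered pairs of distinct sites at taxicab distance $m$ in an $L_x \times L_y$ lattice, let $A_s(m)$ count sites at taxicab distance $m$ from a fixed interior site $h$, let $L_s(m)$ count pairs of sites (both $\ne h$) collinear with $h$ in its row or column, with $h$ strictly between them, at taxicab distance $m$, and let $G_s(m) = L_s(m-2)$. Then $D_s(m) := D(m) - A_s(m) - L_s(m) + G_s(m)$ equals the number of unordered pairs of distinct sites, both different from $h$, whose graph distance in the von Neumann grid graph minus $h$ is exactly $m$. -/

import Mathlib

/-- Taxicab distance between two integer lattice points. -/
def taxi (p q : ℤ × ℤ) : ℤ := |p.1 - q.1| + |p.2 - q.2|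

/-- The `Lx × Ly` rectangular lattice `{1,…,Lx} × {1,…,Ly}`. -/
noncomputable def sites (Lx Ly : ℤ) : Finset (ℤ × ℤ) := Finset.Icc (1, 1) (Lx, Ly)

/-- `D(m)`: the number of unordered pairs of distinct lattice sites at taxicab
distance `m`. -/
noncomputable def pairCount (Lx Ly m : ℤ) : ℕ :=
  (((sites Lx Ly).powersetCard 2).filter
    (fun s => ∃ p ∈ s, ∃ q ∈ s, p ≠ q ∧ taxi p q = m)).card

/-- `A_s(m)`: the number of lattice sites at taxicab distance `m` from `h`. -/
noncomputable def Acount (Lx Ly : ℤ) (h : ℤ × ℤ) (m : ℤ) : ℕ :=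
  ((sites Lx Ly).filter (fun p => taxi p h = m)).card

/-- `u`, `h`, `v` lie in a common row or column, with `h` strictly between `u` and `v`. -/
def Between (u h v : ℤ × ℤ) : Prop :=
  (u.1 = h.1 ∧ h.1 = v.1 ∧ (u.2 < h.2 ∧ h.2 < v.2 ∨ v.2 < h.2 ∧ h.2 < u.2)) ∨
  (u.2 = h.2 ∧ h.2 = v.2 ∧ (u.1 < h.1 ∧ h.1 < v.1 ∨ v.1 < h.1 ∧ h.1 < u.1))

instance (u h v : ℤ × ℤ) : Decidable (Between u h v) := by
  unfold Between; infer_instance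

/-- `L_s(m)`: the number of unordered pairs of lattice sites, both different from `h`,
collinear with `h` in its row or column with `h` strictly between them, at taxicab
distance `m`. -/
noncomputable def Lcount (Lx Ly : ℤ) (h : ℤ × ℤ) (m : ℤ) : ℕ :=
  ((((sites Lx Ly).erase h).powersetCard 2).filter
    (fun s => ∃ p ∈ s, ∃ q ∈ s, p ≠ q ∧ Between p h q ∧ taxi p q = m)).card

/-- The von Neumann grid graph on the accessible sites `acc`. -/
def gridGraph (acc : Set (ℤ × ℤ)) : SimpleGraph (ℤ × ℤ) where
  Adj u v := taxi u v = 1 ∧ u ∈ acc ∧ v ∈ acc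
  symm := by
    constructor
    intro u v h
    exact ⟨by simpa [taxi, abs_sub_comm] using h.1, h.2.2, h.2.1⟩
  loopless := by
    constructor
    intro u h
    simp [taxi] at h

/-- The sites of the `Lx × Ly` rectangle with the single site `h` deleted. -/
def accRect (Lx Ly : ℤ) (h : ℤ × ℤ) : Set (ℤ × ℤ) :=
  {v | 1 ≤ v.1 ∧ v.1 ≤ Lx ∧ 1 ≤ v.2 ∧ v.2 ≤ Ly ∧ v ≠ h}

/-- The number of unordered pairs of distinct accessible sites whose graph distance in
the von Neumann grid graph minus `h` is exactly `m`. -/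
noncomputable def graphPairCount (Lx Ly : ℤ) (h : ℤ × ℤ) (m : ℕ) : ℕ :=
  {s : Set (ℤ × ℤ) | ∃ u v : ℤ × ℤ, u ≠ v ∧ s = {u, v} ∧
    u ∈ accRect Lx Ly h ∧ v ∈ accRect Lx Ly h ∧
    (gridGraph (accRect Lx Ly h)).dist u v = m}.ncard

/-!
Walks in the grid never beat the taxicab distance and have its parity. If `h` is not strictly
between `u` and `v` on a row or column, one of the two L-shaped monotone paths from `u` to `v`
avoids `h`, so their distance is unchanged. If it is, every vertex `x` of a walk of length
`taxi u v` satisfies `taxi u x + taxi x v = taxi u v`, and such a walk has to cross the line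
through `h` perpendicular to `u v`, which it can only do at `h`; a detour through the parallel
neighbouring line has length `taxi u v + 2`, which parity makes optimal. The counting identity
then follows by splitting pairs according to whether `h` lies between them: the pairs counted by
`D(m)` that contain `h` are those counted by `A_s(m)`.
-/

open SimpleGraph

lemma taxi_comm (p q : ℤ × ℤ) : taxi p q = taxi q p := by
  simp only [taxi, abs_sub_comm]

lemma taxi_triangle (u x v : ℤ × ℤ) : taxi u v ≤ taxi u x + taxi x v := by
  simp only [taxi]
  linarith [abs_sub_le u.1 x.1 v.1, abs_sub_le u.2 x.2 v.2]

lemma taxi_swap (p q : ℤ × ℤ) : taxi p.swap q.swap = taxi p q := by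
  simp only [taxi, Prod.fst_swap, Prod.snd_swap, add_comm]

lemma between_symm {u h v : ℤ × ℤ} (hb : Between u h v) : Between v h u := by
  unfold Between at hb ⊢
  omega

lemma SimpleGraph.Walk.exists_mem_support_apply_eq {V : Type*} {G : SimpleGraph V} (f : V → ℤ)
    (hf : ∀ a b, G.Adj a b → f b ≤ f a + 1) {u v : V} (w : G.Walk u v) {c : ℤ}
    (hu : min (f u) (f v) ≤ c) (hv : c ≤ max (f u) (f v)) : ∃ x ∈ w.support, f x = c := by
  have upward {a b : V} (p : G.Walk a b) : f a ≤ c → c ≤ f b → ∃ x ∈ p.support, f x = c := by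
    induction p with
    | nil => exact fun ha hb => ⟨_, List.mem_singleton_self _, le_antisymm ha hb⟩
    | @cons a b _ hab p ih =>
      intro ha hb
      by_cases hac : f a = c
      · exact ⟨a, (Walk.cons hab p).start_mem_support, hac⟩
      · obtain ⟨x, hx, hfx⟩ := ih (by have := hf a b hab; omega) hb
        exact ⟨x, List.mem_cons_of_mem _ hx, hfx⟩
  rcases le_total (f u) (f v) with huv | hvu
  · exact upward w (by simpa [huv] using hu) (by simpa [huv] using hv)
  · obtain ⟨x, hx, hfx⟩ := upward w.reverse (by simpa [hvu] using hu) (by simpa [hvu] using hv)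
    exact ⟨x, by simpa using hx, hfx⟩

namespace gridGraph

variable {acc : Set (ℤ × ℤ)}

lemma taxi_le_length {u v : ℤ × ℤ} (w : (gridGraph acc).Walk u v) : taxi u v ≤ w.length := by
  induction w with
  | nil => simp [taxi]
  | @cons a b c hab w ih =>
    have := taxi_triangle a b c
    have : taxi a b = 1 := hab.1
    rw [Walk.length_cons]
    omega

lemma length_emod_two {u v : ℤ × ℤ} (w : (gridGraph acc).Walk u v) :
    (w.length : ℤ) % 2 = taxi u v % 2 := by
  induction w with
  | nil => simp [taxi]
  | @cons a b c hab w ih =>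
    have : taxi a b = 1 := hab.1
    simp only [taxi, abs_eq_max_neg] at this ih ⊢
    rw [Walk.length_cons]
    omega

lemma taxi_add_taxi_of_length_eq {u v x : ℤ × ℤ} (w : (gridGraph acc).Walk u v)
    (hw : (w.length : ℤ) = taxi u v) (hx : x ∈ w.support) :
    taxi u x + taxi x v = taxi u v := by
  obtain ⟨q, r, rfl⟩ := Walk.mem_support_iff_exists_append.mp hx
  have := taxi_le_length q
  have := taxi_le_length r
  have := taxi_triangle u x v
  rw [Walk.length_append] at hw
  omega

lemma mem_of_mem_support {u v x : ℤ × ℤ} (hu : u ∈ acc) (w : (gridGraph acc).Walk u v)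
    (hx : x ∈ w.support) : x ∈ acc := by
  induction w with
  | nil => rwa [List.mem_singleton.mp hx]
  | cons hab w ih =>
    rcases List.mem_cons.mp hx with rfl | hx
    exacts [hu, ih hab.2.2 hx]

lemma fst_le_of_adj {a b : ℤ × ℤ} (hab : (gridGraph acc).Adj a b) : b.1 ≤ a.1 + 1 := by
  have := hab.1
  simp only [taxi, abs_eq_max_neg] at this
  omega

lemma snd_le_of_adj {a b : ℤ × ℤ} (hab : (gridGraph acc).Adj a b) : b.2 ≤ a.2 + 1 := by
  have := hab.1
  simp only [taxi, abs_eq_max_neg] at this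
  omega

lemma length_ne_taxi_of_between {u h v : ℤ × ℤ} (hu : u ∈ acc) (hh : h ∉ acc)
    (hb : Between u h v) (w : (gridGraph acc).Walk u v) : (w.length : ℤ) ≠ taxi u v := by
  intro hw
  suffices ∃ x ∈ w.support, x = h by
    obtain ⟨x, hx, rfl⟩ := this
    exact hh (mem_of_mem_support hu w hx)
  unfold Between at hb
  rcases hb with ⟨h1, h2, hs⟩ | ⟨h1, h2, hs⟩
  · obtain ⟨x, hx, hx2⟩ := w.exists_mem_support_apply_eq Prod.snd (fun _ _ => snd_le_of_adj)
      (c := h.2) (by omega) (by omega)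
    have hgeo := taxi_add_taxi_of_length_eq w hw hx
    simp only [taxi, abs_eq_max_neg] at hgeo
    exact ⟨x, hx, Prod.ext (by omega) hx2⟩
  · obtain ⟨x, hx, hx1⟩ := w.exists_mem_support_apply_eq Prod.fst (fun _ _ => fst_le_of_adj)
      (c := h.1) (by omega) (by omega)
    have hgeo := taxi_add_taxi_of_length_eq w hw hx
    simp only [taxi, abs_eq_max_neg] at hgeo
    exact ⟨x, hx, Prod.ext hx1 (by omega)⟩

lemma dist_eq_taxi {u v : ℤ × ℤ} (w : (gridGraph acc).Walk u v)
    (hw : (w.length : ℤ) = taxi u v) : ((gridGraph acc).dist u v : ℤ) = taxi u v := by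
  obtain ⟨p, hp⟩ := w.reachable.exists_walk_length_eq_dist
  have := taxi_le_length p
  have : (gridGraph acc).dist u v ≤ w.length := dist_le w
  rw [hp] at *
  omega

lemma dist_eq_taxi_add_two {u h v : ℤ × ℤ} (hu : u ∈ acc) (hh : h ∉ acc) (hb : Between u h v)
    (w : (gridGraph acc).Walk u v) (hw : (w.length : ℤ) = taxi u v + 2) :
    ((gridGraph acc).dist u v : ℤ) = taxi u v + 2 := by
  obtain ⟨p, hp⟩ := w.reachable.exists_walk_length_eq_dist
  have := taxi_le_length p
  have := length_emod_two p
  have := length_ne_taxi_of_between hu hh hb p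
  have : (gridGraph acc).dist u v ≤ w.length := dist_le w
  rw [hp] at *
  omega

lemma exists_walk_vertical_of_le (x : ℤ) {a b : ℤ} (hab : a ≤ b)
    (hmem : ∀ t, a ≤ t → t ≤ b → (x, t) ∈ acc) :
    ∃ w : (gridGraph acc).Walk (x, a) (x, b), (w.length : ℤ) = b - a := by
  induction b, hab using Int.leInduction with
  | base => exact ⟨Walk.nil, by simp⟩
  | succ b hab ih =>
    obtain ⟨w, hw⟩ := ih fun t h1 h2 => hmem t h1 (by omega)
    have hadj : (gridGraph acc).Adj (x, b) (x, b + 1) :=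
      ⟨by simp [taxi], hmem b hab (by omega), hmem _ (by omega) le_rfl⟩
    exact ⟨w.concat hadj, by rw [Walk.length_concat]; push_cast; omega⟩

lemma exists_walk_vertical (x a b : ℤ) (hmem : ∀ t, min a b ≤ t → t ≤ max a b → (x, t) ∈ acc) :
    ∃ w : (gridGraph acc).Walk (x, a) (x, b), (w.length : ℤ) = taxi (x, a) (x, b) := by
  simp only [taxi, sub_self, abs_zero, zero_add]
  rcases le_total a b with hab | hba
  · obtain ⟨w, hw⟩ := exists_walk_vertical_of_le x hab fun t h1 h2 => hmem t (by omega) (by omega)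
    exact ⟨w, by rw [hw, abs_sub_comm, abs_of_nonneg (by omega)]⟩
  · obtain ⟨w, hw⟩ := exists_walk_vertical_of_le x hba fun t h1 h2 => hmem t (by omega) (by omega)
    exact ⟨w.reverse, by rw [Walk.length_reverse, hw, abs_of_nonneg (by omega)]⟩

def swapHom : gridGraph (Prod.swap ⁻¹' acc) →g gridGraph acc where
  toFun := Prod.swap
  map_rel' h := ⟨(taxi_swap _ _).trans h.1, h.2.1, h.2.2⟩

lemma exists_walk_horizontal (y a b : ℤ) (hmem : ∀ t, min a b ≤ t → t ≤ max a b → (t, y) ∈ acc) :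
    ∃ w : (gridGraph acc).Walk (a, y) (b, y), (w.length : ℤ) = taxi (a, y) (b, y) := by
  obtain ⟨w, hw⟩ := exists_walk_vertical (acc := Prod.swap ⁻¹' acc) y a b hmem
  exact ⟨w.map swapHom, (congrArg Nat.cast (w.length_map swapHom)).trans
    (hw.trans (taxi_swap (a, y) (b, y)))⟩

lemma exists_walk_vertical_horizontal {u v : ℤ × ℤ}
    (hcol : ∀ t, min u.2 v.2 ≤ t → t ≤ max u.2 v.2 → (u.1, t) ∈ acc)
    (hrow : ∀ t, min u.1 v.1 ≤ t → t ≤ max u.1 v.1 → (t, v.2) ∈ acc) :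
    ∃ w : (gridGraph acc).Walk u v, (w.length : ℤ) = taxi u v := by
  obtain ⟨w₁, h₁⟩ := exists_walk_vertical u.1 u.2 v.2 hcol
  obtain ⟨w₂, h₂⟩ := exists_walk_horizontal v.2 u.1 v.1 hrow
  refine ⟨w₁.append w₂, ?_⟩
  simp only [taxi, sub_self, abs_zero, add_zero, zero_add] at h₁ h₂ ⊢
  rw [Walk.length_append]
  push_cast
  rw [h₁, h₂, add_comm]

lemma exists_walk_horizontal_vertical {u v : ℤ × ℤ}
    (hrow : ∀ t, min u.1 v.1 ≤ t → t ≤ max u.1 v.1 → (t, u.2) ∈ acc)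
    (hcol : ∀ t, min u.2 v.2 ≤ t → t ≤ max u.2 v.2 → (v.1, t) ∈ acc) :
    ∃ w : (gridGraph acc).Walk u v, (w.length : ℤ) = taxi u v := by
  obtain ⟨w, hw⟩ := exists_walk_vertical_horizontal (u := v) (v := u)
    (by simpa only [min_comm, max_comm] using hcol) (by simpa only [min_comm, max_comm] using hrow)
  exact ⟨w.reverse, by rw [Walk.length_reverse, hw, taxi_comm]⟩

end gridGraph

section Rectangle

variable {Lx Ly : ℤ} {h u v : ℤ × ℤ}

lemma mem_accRect :
    u ∈ accRect Lx Ly h ↔ 1 ≤ u.1 ∧ u.1 ≤ Lx ∧ 1 ≤ u.2 ∧ u.2 ≤ Ly ∧ ¬(u.1 = h.1 ∧ u.2 = h.2) := by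
  simp only [accRect, Set.mem_ofPred_eq, ne_eq, Prod.ext_iff]

lemma notMem_accRect_self : h ∉ accRect Lx Ly h := fun hh => hh.2.2.2.2 rfl

lemma exists_walk_accRect_of_not_between (hu : u ∈ accRect Lx Ly h) (hv : v ∈ accRect Lx Ly h)
    (hb : ¬Between u h v) :
    ∃ w : (gridGraph (accRect Lx Ly h)).Walk u v, (w.length : ℤ) = taxi u v := by
  rw [mem_accRect] at hu hv
  unfold Between at hb
  by_cases hcorner : (u.1 = h.1 ∧ min u.2 v.2 ≤ h.2 ∧ h.2 ≤ max u.2 v.2) ∨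
      (v.2 = h.2 ∧ min u.1 v.1 ≤ h.1 ∧ h.1 ≤ max u.1 v.1)
  · exact gridGraph.exists_walk_horizontal_vertical
      (fun t _ _ => mem_accRect.mpr (by omega)) (fun t _ _ => mem_accRect.mpr (by omega))
  · exact gridGraph.exists_walk_vertical_horizontal
      (fun t _ _ => mem_accRect.mpr (by omega)) (fun t _ _ => mem_accRect.mpr (by omega))

/-- The detour runs along the line parallel to `u v` on the `Lx`- or `Ly`-side of `h`. -/
lemma exists_walk_accRect_of_between (hx : h.1 < Lx) (hy : h.2 < Ly)
    (hu : u ∈ accRect Lx Ly h) (hv : v ∈ accRect Lx Ly h) (hb : Between u h v) :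
    ∃ w : (gridGraph (accRect Lx Ly h)).Walk u v, (w.length : ℤ) = taxi u v + 2 := by
  have hu' := mem_accRect.mp hu
  have hv' := mem_accRect.mp hv
  unfold Between at hb
  rcases hb with ⟨h1, h2, hs⟩ | ⟨h1, h2, hs⟩
  · have hadj : (gridGraph (accRect Lx Ly h)).Adj u (u.1 + 1, u.2) :=
      ⟨by simp [taxi], hu, mem_accRect.mpr (by simp only; omega)⟩
    obtain ⟨w, hw⟩ := gridGraph.exists_walk_vertical_horizontal (acc := accRect Lx Ly h)
      (u := (u.1 + 1, u.2)) (v := v)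
      (fun t h₁ h₂ => mem_accRect.mpr (by simp only at h₁ h₂ ⊢; omega))
      (fun t h₁ h₂ => mem_accRect.mpr (by simp only at h₁ h₂ ⊢; omega))
    refine ⟨.cons hadj w, ?_⟩
    simp only [taxi, abs_eq_max_neg, Walk.length_cons] at hw ⊢
    push_cast
    omega
  · have hadj : (gridGraph (accRect Lx Ly h)).Adj u (u.1, u.2 + 1) :=
      ⟨by simp [taxi], hu, mem_accRect.mpr (by simp only; omega)⟩
    obtain ⟨w, hw⟩ := gridGraph.exists_walk_horizontal_vertical (acc := accRect Lx Ly h)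
      (u := (u.1, u.2 + 1)) (v := v)
      (fun t h₁ h₂ => mem_accRect.mpr (by simp only at h₁ h₂ ⊢; omega))
      (fun t h₁ h₂ => mem_accRect.mpr (by simp only at h₁ h₂ ⊢; omega))
    refine ⟨.cons hadj w, ?_⟩
    simp only [taxi, abs_eq_max_neg, Walk.length_cons] at hw ⊢
    push_cast
    omega

theorem dist_accRect (hx : h.1 < Lx) (hy : h.2 < Ly)
    (hu : u ∈ accRect Lx Ly h) (hv : v ∈ accRect Lx Ly h) :
    ((gridGraph (accRect Lx Ly h)).dist u v : ℤ) =
      if Between u h v then taxi u v + 2 else taxi u v := by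
  split_ifs with hb
  · obtain ⟨w, hw⟩ := exists_walk_accRect_of_between hx hy hu hv hb
    exact gridGraph.dist_eq_taxi_add_two hu notMem_accRect_self hb w hw
  · obtain ⟨w, hw⟩ := exists_walk_accRect_of_not_between hu hv hb
    exact gridGraph.dist_eq_taxi w hw

end Rectangle

section PairCounting

open Finset

variable {α : Type*} [DecidableEq α] {T : Finset α} {R P : α → α → Prop} [DecidableRel R]

/-- `pairCount` and `Lcount` unfold to `pairsWith`. -/
def pairsWith (T : Finset α) (R : α → α → Prop) [DecidableRel R] : Finset (Finset α) :=
  (T.powersetCard 2).filter fun s => ∃ p ∈ s, ∃ q ∈ s, p ≠ q ∧ R p q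

lemma exists_ne_rel_of_mem_pair_iff (hP : ∀ u v, P u v → P v u) {u v : α} (huv : u ≠ v) :
    (∃ p ∈ ({u, v} : Finset α), ∃ q ∈ ({u, v} : Finset α), p ≠ q ∧ P p q) ↔ P u v := by
  simpa [huv, huv.symm] using hP v u

lemma mem_pairsWith {s : Finset α} :
    s ∈ pairsWith T R ↔ ∃ u ∈ T, ∃ v ∈ T, u ≠ v ∧ R u v ∧ s = {u, v} := by
  simp only [pairsWith, mem_filter, mem_powersetCard]
  constructor
  · rintro ⟨⟨hsT, hs⟩, p, hp, q, hq, hpq, hR⟩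
    refine ⟨p, hsT hp, q, hsT hq, hpq, hR, (eq_of_subset_of_card_le ?_ ?_).symm⟩
    · simp [insert_subset_iff, hp, hq]
    · rw [hs, card_pair hpq]
  · rintro ⟨u, hu, v, hv, huv, hR, rfl⟩
    exact ⟨⟨by simp [insert_subset_iff, hu, hv], card_pair huv⟩, u, by simp, v, by simp, huv, hR⟩

lemma pairsWith_congr {R' : α → α → Prop} [DecidableRel R']
    (h : ∀ u ∈ T, ∀ v ∈ T, u ≠ v → (R u v ↔ R' u v)) : pairsWith T R = pairsWith T R' := by
  ext s
  simp only [mem_pairsWith]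
  constructor <;> rintro ⟨u, hu, v, hv, huv, hR, rfl⟩
  exacts [⟨u, hu, v, hv, huv, (h u hu v hv huv).mp hR, rfl⟩,
    ⟨u, hu, v, hv, huv, (h u hu v hv huv).mpr hR, rfl⟩]

lemma card_pairsWith_and_add_card_pairsWith_and_not [DecidableRel P] (hP : ∀ u v, P u v → P v u) :
    #(pairsWith T fun u v => R u v ∧ P u v) + #(pairsWith T fun u v => R u v ∧ ¬P u v) =
      #(pairsWith T R) := by
  rw [← card_filter_add_card_filter_not (s := pairsWith T R)
    fun s => ∃ p ∈ s, ∃ q ∈ s, p ≠ q ∧ P p q]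
  congr 2 <;> ext s <;> simp only [mem_filter, mem_pairsWith] <;> constructor
  · rintro ⟨u, hu, v, hv, huv, ⟨hR, hPuv⟩, rfl⟩
    exact ⟨⟨u, hu, v, hv, huv, hR, rfl⟩, (exists_ne_rel_of_mem_pair_iff hP huv).mpr hPuv⟩
  · rintro ⟨⟨u, hu, v, hv, huv, hR, rfl⟩, hPuv⟩
    exact ⟨u, hu, v, hv, huv, ⟨hR, (exists_ne_rel_of_mem_pair_iff hP huv).mp hPuv⟩, rfl⟩
  · rintro ⟨u, hu, v, hv, huv, ⟨hR, hPuv⟩, rfl⟩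
    exact ⟨⟨u, hu, v, hv, huv, hR, rfl⟩, mt (exists_ne_rel_of_mem_pair_iff hP huv).mp hPuv⟩
  · rintro ⟨⟨u, hu, v, hv, huv, hR, rfl⟩, hPuv⟩
    exact ⟨u, hu, v, hv, huv, ⟨hR, mt (exists_ne_rel_of_mem_pair_iff hP huv).mpr hPuv⟩, rfl⟩

/-- The pairs through `a` correspond to their second points `p ↦ {p, a}`. -/
lemma card_pairsWith_erase_add_card_filter {a : α} (ha : a ∈ T) (hR : ∀ u v, R u v → R v u)
    (hRa : ¬R a a) : #(pairsWith (T.erase a) R) + #(T.filter (R · a)) = #(pairsWith T R) := by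
  rw [← card_filter_add_card_filter_not (s := pairsWith T R) (a ∉ ·)]
  congr 1
  · congr 1
    ext s
    simp only [mem_filter, mem_pairsWith, mem_erase]
    constructor
    · rintro ⟨u, ⟨hua, hu⟩, v, ⟨hva, hv⟩, huv, hR, rfl⟩
      exact ⟨⟨u, hu, v, hv, huv, hR, rfl⟩, by simp [hua.symm, hva.symm]⟩
    · rintro ⟨⟨u, hu, v, hv, huv, hR, rfl⟩, has⟩
      simp only [mem_insert, mem_singleton, not_or] at has
      exact ⟨u, ⟨Ne.symm has.1, hu⟩, v, ⟨Ne.symm has.2, hv⟩, huv, hR, rfl⟩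
  · simp only [not_not]
    have hpa {p : α} (hp : p ∈ T.filter (R · a)) : p ≠ a := by
      rintro rfl
      exact hRa (mem_filter.mp hp).2
    refine card_bij (fun p _ => {p, a}) ?_ ?_ ?_
    · intro p hp
      exact mem_filter.mpr ⟨mem_pairsWith.mpr ⟨p, (mem_filter.mp hp).1, a, ha, hpa hp,
        (mem_filter.mp hp).2, rfl⟩, by simp⟩
    · intro p hp q hq hpq
      have : p ∈ ({q, a} : Finset α) := hpq ▸ mem_insert_self p {a}
      simpa [hpa hp] using this
    · intro s hs
      obtain ⟨hs, has⟩ := mem_filter.mp hs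
      obtain ⟨u, hu, v, hv, huv, huv', rfl⟩ := mem_pairsWith.mp hs
      rcases mem_insert.mp has with rfl | has
      · exact ⟨v, mem_filter.mpr ⟨hv, hR _ _ huv'⟩, pair_comm _ _⟩
      · rw [mem_singleton.mp has]
        exact ⟨u, mem_filter.mpr ⟨hu, huv'⟩, rfl⟩

lemma ncard_setOf_pairs_eq_card_pairsWith (A : Set α) (hA : ∀ x, x ∈ A ↔ x ∈ T) :
    {s : Set α | ∃ u v, u ≠ v ∧ s = {u, v} ∧ u ∈ A ∧ v ∈ A ∧ R u v}.ncard =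
      #(pairsWith T R) := by
  have hset : {s : Set α | ∃ u v, u ≠ v ∧ s = {u, v} ∧ u ∈ A ∧ v ∈ A ∧ R u v} =
      (↑) '' (pairsWith T R : Set (Finset α)) := by
    ext s
    simp only [Set.mem_ofPred_eq, Set.mem_image, mem_coe, mem_pairsWith, hA]
    constructor
    · rintro ⟨u, v, huv, rfl, hu, hv, hR⟩
      exact ⟨{u, v}, ⟨u, hu, v, hv, huv, hR, rfl⟩, by simp⟩
    · rintro ⟨_, ⟨u, hu, v, hv, huv, hR, rfl⟩, rfl⟩
      exact ⟨u, v, huv, by simp, hu, hv, hR⟩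
  rw [hset, Set.ncard_image_of_injective _ coe_injective, Set.ncard_coe_finset]

end PairCounting

section Counting

open Finset

variable {Lx Ly : ℤ} {h : ℤ × ℤ}

lemma mem_accRect_iff_mem_erase_sites {x : ℤ × ℤ} :
    x ∈ accRect Lx Ly h ↔ x ∈ (sites Lx Ly).erase h := by
  simp only [sites, mem_accRect, mem_erase, mem_Icc, Prod.le_def, ne_eq, Prod.ext_iff]
  omega

lemma graphPairCount_eq (hx : h.1 < Lx) (hy : h.2 < Ly) (m : ℕ) :
    graphPairCount Lx Ly h m = Lcount Lx Ly h (m - 2) +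
      #(pairsWith ((sites Lx Ly).erase h) fun u v => taxi u v = m ∧ ¬Between u h v) := by
  set S := (sites Lx Ly).erase h
  set G := gridGraph (accRect Lx Ly h)
  have hdist : ∀ u ∈ S, ∀ v ∈ S, (G.dist u v = m ↔
      Between u h v ∧ taxi u v = m - 2 ∨ ¬Between u h v ∧ taxi u v = m) := fun u hu v hv => by
    have : (G.dist u v : ℤ) = if Between u h v then taxi u v + 2 else taxi u v :=
      dist_accRect hx hy (mem_accRect_iff_mem_erase_sites.mpr hu)
        (mem_accRect_iff_mem_erase_sites.mpr hv)
    split_ifs at this with hb <;> simp [hb] <;> omega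
  have hsplit := card_pairsWith_and_add_card_pairsWith_and_not (T := S)
    (R := fun u v => G.dist u v = m) (P := fun u v => Between u h v) fun _ _ => between_symm
  rw [pairsWith_congr (R := fun u v => G.dist u v = m ∧ Between u h v)
      (R' := fun u v => Between u h v ∧ taxi u v = m - 2)
      fun u hu v hv _ => by rw [hdist u hu v hv]; tauto,
    pairsWith_congr (R := fun u v => G.dist u v = m ∧ ¬Between u h v)
      (R' := fun u v => taxi u v = m ∧ ¬Between u h v)
      fun u hu v hv _ => by rw [hdist u hu v hv]; tauto] at hsplit
  calc graphPairCount Lx Ly h m = #(pairsWith S fun u v => G.dist u v = m) :=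
        ncard_setOf_pairs_eq_card_pairsWith _ fun _ => mem_accRect_iff_mem_erase_sites
    _ = _ := hsplit.symm

lemma pairCount_eq (hh : h ∈ sites Lx Ly) {m : ℤ} (hm : m ≠ 0) :
    pairCount Lx Ly m = Acount Lx Ly h m + Lcount Lx Ly h m +
      #(pairsWith ((sites Lx Ly).erase h) fun u v => taxi u v = m ∧ ¬Between u h v) := by
  have hsites := card_pairsWith_erase_add_card_filter (R := fun u v => taxi u v = m) hh
    (fun u v huv => (taxi_comm v u).trans huv) (by simpa [taxi] using hm.symm)
  have hsplit := card_pairsWith_and_add_card_pairsWith_and_not (T := (sites Lx Ly).erase h)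
    (R := fun u v => taxi u v = m) (P := fun u v => Between u h v) fun _ _ => between_symm
  rw [pairsWith_congr (R' := fun u v => Between u h v ∧ taxi u v = m)
    fun _ _ _ _ _ => and_comm] at hsplit
  change #(pairsWith (sites Lx Ly) fun u v => taxi u v = m) =
    #((sites Lx Ly).filter (taxi · h = m)) +
      #(pairsWith ((sites Lx Ly).erase h) fun u v => Between u h v ∧ taxi u v = m) + _
  omega

end Counting

theorem stmt16_general (Lx Ly Hx Hy : ℤ)
    (hHx1 : 1 < Hx) (hHx2 : Hx < Lx) (hHy1 : 1 < Hy) (hHy2 : Hy < Ly)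
    (m : ℕ) (hm : 1 ≤ m) :
    (graphPairCount Lx Ly (Hx, Hy) m : ℤ) =
      (pairCount Lx Ly m : ℤ) - (Acount Lx Ly (Hx, Hy) m : ℤ) -
        (Lcount Lx Ly (Hx, Hy) m : ℤ) + (Lcount Lx Ly (Hx, Hy) ((m : ℤ) - 2) : ℤ) := by
  have hgraph := graphPairCount_eq (h := (Hx, Hy)) hHx2 hHy2 m
  have hsites := pairCount_eq (Lx := Lx) (Ly := Ly) (h := (Hx, Hy))
    (by simp only [sites, Finset.mem_Icc, Prod.le_def]; omega) (m := m) (by omega)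
  omega

theorem stmt16 (Lx Ly Hx Hy : ℤ) (hLx : 3 ≤ Lx) (hLy : 3 ≤ Ly)
    (hHx1 : 1 < Hx) (hHx2 : Hx < Lx) (hHy1 : 1 < Hy) (hHy2 : Hy < Ly)
    (m : ℕ) (hm : 1 ≤ m) :
    (graphPairCount Lx Ly (Hx, Hy) m : ℤ) =
      (pairCount Lx Ly m : ℤ) - (Acount Lx Ly (Hx, Hy) m : ℤ) -
        (Lcount Lx Ly (Hx, Hy) m : ℤ) + (Lcount Lx Ly (Hx, Hy) ((m : ℤ) - 2) : ℤ) :=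
  stmt16_general Lx Ly Hx Hy hHx1 hHx2 hHy1 hHy2 m hm
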